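/- arXiv:1909.03061 — 3 statements merged into one kernel-verified Lean document; each statement's English description precedes it below -/
import Mathlib

section
/- Let X be a compact Hausdorff space with uniformity 𝒰 and f : X → X continuous. For every entourage E ∈ 𝒰 there exists n ∈ ℕ such that for every x ∈ X there exists z ∈ X with ω(z) ⊆ ⋃_{i=1}^{n} B_E(f^i(x)). -/
def omegaLim {X : Type*} [TopologicalSpace X] (f : X → X) (x : X) : Set X :=
  ⋂ N : ℕ, closure {y | ∃ n > N, f^[n] x = y}

/-!
For each `z`, the limit set `ω(z)` is compact and lies in the closure of the forward orbit of `z`,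
so finitely many `D`-balls around `f z, …, f^[N z] z` cover it. Points `x` whose first `N z`
iterates stay `D`-close to those of `z` form a neighbourhood of `z`; for them the `E`-balls around
`f x, …, f^[N z] x` cover `ω(z)` once `D` is symmetric with `D ○ D ⊆ E`. Finitely many of these
neighbourhoods cover `X`, and `n` is the largest of the corresponding `N z`.
-/

open Uniformity UniformSpace Topology
open scoped SetRel

theorem IsCompact.exists_finset_subset_biUnion_ball {X ι : Type*} [UniformSpace X] {K : Set X}
    (hK : IsCompact K) {g : ι → X} (hKg : K ⊆ closure (Set.range g)) {U : SetRel X X}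
    (hU : U ∈ 𝓤 X) : ∃ t : Finset ι, K ⊆ ⋃ i ∈ t, ball (g i) U := by
  obtain ⟨V, ⟨hV, hVopen⟩, hVU⟩ := uniformity_hasBasis_open.mem_iff.1 hU
  have hcover : K ⊆ ⋃ i, ball (g i) V := fun y hy => by
    obtain ⟨_, hy, i, rfl⟩ := mem_closure_iff_nhds.1 (hKg hy) _ (mem_nhds_right y hV)
    exact Set.mem_iUnion.2 ⟨i, hy⟩
  obtain ⟨t, ht⟩ := hK.elim_finite_subcover _ (fun i => isOpen_ball _ hVopen) hcover
  exact ⟨t, ht.trans (Set.iUnion₂_mono fun i _ => ball_mono hVU _)⟩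

theorem biUnion_ball_subset_biUnion_ball_comp {X ι : Type*} {a b : ι → X} {s : Set ι}
    {U V : SetRel X X} [V.IsSymm] (hab : ∀ i ∈ s, b i ∈ ball (a i) V) :
    ⋃ i ∈ s, ball (a i) U ⊆ ⋃ i ∈ s, ball (b i) (V ○ U) :=
  Set.biUnion_mono subset_rfl fun i hi _ hy => mem_ball_comp (mem_ball_symmetry.1 (hab i hi)) hy

theorem Continuous.eventually_forall_iterate_mem_ball {X : Type*} [UniformSpace X] {f : X → X}
    (hf : Continuous f) (z : X) (s : Finset ℕ) {U : SetRel X X} (hU : U ∈ 𝓤 X) :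
    ∀ᶠ x in 𝓝 z, ∀ i ∈ s, f^[i] x ∈ ball (f^[i] z) U :=
  (Filter.eventually_all_finset s).2 fun i _ =>
    (hf.iterate i).continuousAt.preimage_mem_nhds (ball_mem_nhds _ hU)

section omegaLim

variable {X : Type*}

theorem isClosed_omegaLim [TopologicalSpace X] (f : X → X) (x : X) : IsClosed (omegaLim f x) :=
  isClosed_iInter fun _ => isClosed_closure

theorem omegaLim_subset_closure_range_iterate [TopologicalSpace X] (f : X → X) (x : X) :
    omegaLim f x ⊆ closure (Set.range fun n => f^[n + 1] x) := by
  refine (Set.iInter_subset _ 0).trans (closure_mono ?_)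
  rintro _ ⟨n, hn, rfl⟩
  exact ⟨n - 1, by simp only [Nat.sub_add_cancel hn]⟩

theorem exists_omegaLim_subset_biUnion_ball [UniformSpace X] [CompactSpace X] (f : X → X)
    (x : X) {U : SetRel X X} (hU : U ∈ 𝓤 X) :
    ∃ n : ℕ, omegaLim f x ⊆ ⋃ i ∈ Finset.Icc 1 n, ball (f^[i] x) U := by
  obtain ⟨t, ht⟩ := (isClosed_omegaLim f x).isCompact.exists_finset_subset_biUnion_ball
    (omegaLim_subset_closure_range_iterate f x) hU
  refine ⟨t.sup id + 1, ht.trans (Set.iUnion₂_subset fun i hi => ?_)⟩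
  have hi_le : i ≤ t.sup id := Finset.le_sup (f := id) hi
  exact Set.subset_biUnion_of_mem (u := fun j => ball (f^[j] x) U)
    (Finset.mem_Icc.2 ⟨by omega, by omega⟩)

end omegaLim

theorem omega_trapped_uniformly_uniform_general {X : Type*} [UniformSpace X] [CompactSpace X]
    (f : X → X) (hf : Continuous f) (E : Set (X × X)) (hE : E ∈ uniformity X) :
    ∃ n : ℕ, ∀ x : X, ∃ z : X,
      omegaLim f z ⊆ ⋃ i ∈ Finset.Icc 1 n, UniformSpace.ball (f^[i] x) E := by
  obtain ⟨D, hD, hDsymm, hDE⟩ := comp_symm_mem_uniformity_sets hE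
  choose N hN using fun z => exists_omegaLim_subset_biUnion_ball f z hD
  obtain ⟨t, -, ht⟩ := isCompact_univ.elim_nhds_subcover
    (fun z => {x | ∀ i ∈ Finset.Icc 1 (N z), f^[i] x ∈ ball (f^[i] z) D})
    fun z _ => hf.eventually_forall_iterate_mem_ball z _ hD
  refine ⟨t.sup N, fun x => ?_⟩
  obtain ⟨z, hzt, hxz⟩ := Set.mem_iUnion₂.1 (ht (Set.mem_univ x))
  refine ⟨z, (hN z).trans ?_⟩
  calc ⋃ i ∈ Finset.Icc 1 (N z), ball (f^[i] z) D
      ⊆ ⋃ i ∈ Finset.Icc 1 (N z), ball (f^[i] x) E :=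
        (biUnion_ball_subset_biUnion_ball_comp hxz).trans
          (Set.iUnion₂_mono fun _ _ => ball_mono hDE _)
    _ ⊆ ⋃ i ∈ Finset.Icc 1 (t.sup N), ball (f^[i] x) E :=
        Set.biUnion_subset_biUnion_left
          (Finset.coe_subset.2 (Finset.Icc_subset_Icc_right (Finset.le_sup hzt)))

theorem omega_trapped_uniformly_uniform {X : Type*} [UniformSpace X] [CompactSpace X] [T2Space X]
    (f : X → X) (hf : Continuous f) (E : Set (X × X)) (hE : E ∈ uniformity X) :
    ∃ n : ℕ, ∀ x : X, ∃ z : X,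
      omegaLim f z ⊆ ⋃ i ∈ Finset.Icc 1 n, UniformSpace.ball (f^[i] x) E :=
  omega_trapped_uniformly_uniform_general f hf E hE
end

section
/- Let X be a compact Hausdorff space with uniformity 𝒰 and f : X → X continuous. Then (X,f) has second weak shadowing: for every entourage E ∈ 𝒰 there exists D ∈ 𝒰 such that for every D-pseudo-orbit (x_i)_{i≥0} there exists z ∈ X with Orb(z) ⊆ B_E({x_i : i ≥ 0}). -/
/-!
Cover `X` by finitely many `U`-balls around centres `c ∈ t`. For each set `S` of centres, let
`M S` be the closed `V`-neighbourhood of `S`. By Cantor's intersection theorem, for each `S`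
there is a time `K_S` such that if some point stays in `M S` for `K_S` steps, then some point
stays there forever; let `K` bound all the `K_S`. A fine enough pseudo-orbit `x` is `U`-shadowed
by the true orbit of `x 0` for `K` steps, so with `S` the set of centres the pseudo-orbit visits,
`x 0` stays in `M S` for `K` steps. A point whose whole orbit lies in `M S` then works.
-/

open Set UniformSpace Filter
open scoped Uniformity SetRel

def IsPseudoOrbit {X : Type*} (f : X → X) (D : SetRel X X) (x : ℕ → X) : Prop :=
  ∀ i, (f (x i), x (i + 1)) ∈ D

section UniformSpace

variable {X : Type*} [UniformSpace X] {f : X → X}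

theorem UniformContinuous.eventually_isPseudoOrbit_iterate_mem (hf : UniformContinuous f)
    (k : ℕ) {V : SetRel X X} (hV : V ∈ 𝓤 X) :
    ∀ᶠ D in (𝓤 X).smallSets, ∀ x, IsPseudoOrbit f D x → (f^[k] (x 0), x k) ∈ V := by
  induction k generalizing V with
  | zero => exact .of_forall fun _ _ _ ↦ refl_mem_uniformity hV
  | succ k ih =>
    obtain ⟨H, hH, hHV⟩ := comp_mem_uniformity_sets hV
    filter_upwards [ih (hf hH), eventually_smallSets_subset.2 hH] with D hD hDH x hx
    rw [Function.iterate_succ_apply']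
    exact hHV ⟨f (x k), hD x hx, hDH (hx k)⟩

end UniformSpace

section Compact

variable {X : Type*} [TopologicalSpace X] [CompactSpace X] {f : X → X}

theorem exists_forall_iterate_mem_of_forall_exists (hf : Continuous f) {M : Set X}
    (hM : IsClosed M) (h : ∀ K, ∃ y, ∀ k ≤ K, f^[k] y ∈ M) : ∃ z, ∀ k, f^[k] z ∈ M := by
  let T : ℕ → Set X := fun K ↦ ⋂ k ≤ K, f^[k] ⁻¹' M
  have hT_closed (K : ℕ) : IsClosed (T K) :=
    isClosed_iInter fun k ↦ isClosed_iInter fun _ ↦ hM.preimage (hf.iterate k)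
  obtain ⟨z, hz⟩ := IsCompact.nonempty_iInter_of_sequence_nonempty_isCompact_isClosed T
    (fun K ↦ biInter_mono (fun k hk ↦ Nat.le_succ_of_le hk) fun _ _ ↦ subset_rfl)
    (fun K ↦ (h K).imp fun _ hy ↦ mem_iInter₂.2 hy) (hT_closed 0).isCompact hT_closed
  exact ⟨z, fun k ↦ mem_iInter₂.1 (mem_iInter.1 hz k) k le_rfl⟩

theorem exists_forall_iterate_mem_of_forall_le {ι : Type*} [Finite ι] (hf : Continuous f)
    {M : ι → Set X} (hM : ∀ j, IsClosed (M j)) :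
    ∃ K, ∀ j y, (∀ k ≤ K, f^[k] y ∈ M j) → ∃ z, ∀ k, f^[k] z ∈ M j := by
  have hbound (j : ι) : ∃ K, ∀ y, (∀ k ≤ K, f^[k] y ∈ M j) → ∃ z, ∀ k, f^[k] z ∈ M j := by
    by_contra! h
    obtain ⟨z, hz⟩ := exists_forall_iterate_mem_of_forall_exists hf (hM j)
      fun K ↦ (h K).imp fun _ ↦ And.left
    obtain ⟨y, -, hy⟩ := h 0
    obtain ⟨k, hk⟩ := hy z
    exact hk (hz k)
  choose K hK using hbound
  obtain ⟨N, hN⟩ := Finite.exists_le K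
  exact ⟨N, fun j y hy ↦ hK j y fun k hk ↦ hy k (hk.trans (hN j))⟩

end Compact

theorem second_weak_shadowing_uniform_general {X : Type*} [UniformSpace X] [CompactSpace X]
    (f : X → X) (hf : Continuous f) (E : Set (X × X)) (hE : E ∈ uniformity X) :
    ∃ D ∈ uniformity X, ∀ x : ℕ → X, (∀ i, (f (x i), x (i + 1)) ∈ D) →
      ∃ z : X, ∀ k : ℕ, ∃ i : ℕ, (x i, f^[k] z) ∈ E := by
  obtain ⟨V, ⟨hV, hV_closed⟩, hVE⟩ :=
    (uniformity_hasBasis_closed.lift' (monotone_id.relComp monotone_id)).mem_iff.1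
      (comp_le_uniformity hE)
  obtain ⟨U, hU, hU_symm, hUV⟩ := comp_symm_mem_uniformity_sets hV
  obtain ⟨t, ht, hcover⟩ := isCompact_univ.totallyBounded U hU
  have := ht.to_subtype
  obtain ⟨K, hK⟩ := exists_forall_iterate_mem_of_forall_le
    (M := fun S : Set t ↦ ⋃ c ∈ S, ball c.1 V) hf
    fun S ↦ S.toFinite.isClosed_biUnion fun c _ ↦ isClosed_ball _ hV_closed
  have hf_unif := CompactSpace.uniformContinuous_of_continuous hf
  obtain ⟨D, hD, hDU⟩ := eventually_smallSets.1 <| (eventually_all_finite (finite_Iic K)).2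
    fun k _ ↦ hf_unif.eventually_isPseudoOrbit_iterate_mem k hU
  refine ⟨D, hD, fun x hx ↦ ?_⟩
  obtain ⟨z, hz⟩ := hK {c | ∃ i, (x i, c.1) ∈ V} (x 0) fun k hk ↦ by
    obtain ⟨c, hct, hkc : (x k, c) ∈ U⟩ := mem_iUnion₂.1 (hcover (mem_univ (x k)))
    have hUV' : U ⊆ V := (subset_comp_self_of_mem_uniformity hU).trans hUV
    refine mem_biUnion (x := ⟨c, hct⟩) ⟨k, hUV' hkc⟩ ?_
    exact hUV ⟨x k, SetRel.symm U hkc, SetRel.symm U (hDU D subset_rfl k hk x hx)⟩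
  refine ⟨z, fun k ↦ ?_⟩
  obtain ⟨c, ⟨i, hic⟩, hcz⟩ := mem_iUnion₂.1 (hz k)
  exact ⟨i, hVE ⟨c, hic, hcz⟩⟩

theorem second_weak_shadowing_uniform {X : Type*} [UniformSpace X] [CompactSpace X] [T2Space X]
    (f : X → X) (hf : Continuous f) (E : Set (X × X)) (hE : E ∈ uniformity X) :
    ∃ D ∈ uniformity X, ∀ x : ℕ → X, (∀ i, (f (x i), x (i + 1)) ∈ D) →
      ∃ z : X, ∀ k : ℕ, ∃ i : ℕ, (x i, f^[k] z) ∈ E :=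
  second_weak_shadowing_uniform_general f hf E hE
end

section
/- Let (X,d) be a compact metric space and f : X → X continuous. If (X,f) is minimal, then for every ε > 0 there exist δ > 0 and n ∈ ℕ such that every δ-pseudo-orbit (x_i)_{i≥0} satisfies B_ε({x_0,…,x_n}) = X, i.e. the first n+1 points of any δ-pseudo-orbit form an ε-net of X. -/
/-- For each point c, there is a uniform time bound N such that every orbit
visits the r-ball around c within time N. -/
lemma visit_bound {X : Type*} [MetricSpace X] [CompactSpace X]
    (f : X → X) (hf : Continuous f) (hmin : ∀ x : X, omegaLim f x = Set.univ)
    (c : X) (r : ℝ) (hr : 0 < r) :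
    ∃ N : ℕ, ∀ x : X, ∃ i ≤ N, dist (f^[i] x) c < r := by
  set U : ℕ → Set X := fun n => {x | dist (f^[n] x) c < r} with hU
  have hopen : ∀ n, IsOpen (U n) := fun n =>
    isOpen_lt ((continuous_id.dist continuous_const).comp (hf.iterate n)) continuous_const
  have hcover : (Set.univ : Set X) ⊆ ⋃ n, U n := by
    intro x _
    have hc : c ∈ omegaLim f x := by rw [hmin x]; trivial
    have hc0 : c ∈ closure {y | ∃ n > 0, f^[n] x = y} := by
      have := Set.mem_iInter.mp hc 0
      exact this
    rcases Metric.mem_closure_iff.mp hc0 r hr with ⟨y, ⟨n, _, hny⟩, hdy⟩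
    refine Set.mem_iUnion.mpr ⟨n, ?_⟩
    simp only [hU, Set.mem_setOf_eq, hny]
    rwa [dist_comm]
  rcases isCompact_univ.elim_finite_subcover U hopen hcover with ⟨s, hs⟩
  refine ⟨s.sup id, fun x => ?_⟩
  rcases Set.mem_iUnion₂.mp (hs (Set.mem_univ x)) with ⟨n, hns, hxn⟩
  exact ⟨n, Finset.le_sup (f := id) hns, hxn⟩

/-- Finite-time tracking of pseudo-orbits. -/
lemma pseudo_track {X : Type*} [MetricSpace X] [CompactSpace X]
    (f : X → X) (hf : Continuous f) (ε' : ℝ) (hε' : 0 < ε') (N : ℕ) :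
    ∃ δ > (0 : ℝ), ∀ x : ℕ → X, (∀ i, dist (f (x i)) (x (i + 1)) < δ) →
      ∀ i ≤ N, dist (f^[i] (x 0)) (x i) < ε' := by
  induction N generalizing ε' with
  | zero =>
    refine ⟨ε', hε', fun x _ i hi => ?_⟩
    interval_cases i
    simpa using hε'
  | succ N ih =>
    have huc : UniformContinuous f := CompactSpace.uniformContinuous_of_continuous hf
    rcases Metric.uniformContinuous_iff.mp huc (ε' / 2) (by linarith) with ⟨θ, hθ, hθ'⟩
    rcases ih (min θ (ε' / 2)) (lt_min hθ (by linarith)) with ⟨δ, hδ, hδ'⟩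
    refine ⟨min δ (ε' / 2), lt_min hδ (by linarith), fun x hx i hi => ?_⟩
    have hx' : ∀ j, dist (f (x j)) (x (j + 1)) < δ :=
      fun j => lt_of_lt_of_le (hx j) (min_le_left _ _)
    rcases Nat.lt_succ_iff_lt_or_eq.mp (Nat.lt_succ_of_le hi) with h | h
    · exact lt_of_lt_of_le (hδ' x hx' i (Nat.lt_succ_iff.mp h)) ((min_le_right _ _).trans (by linarith))
    · subst h
      have h1 : dist (f^[N] (x 0)) (x N) < θ :=
        lt_of_lt_of_le (hδ' x hx' N le_rfl) (min_le_left _ _)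
      have h2 : dist (f (f^[N] (x 0))) (f (x N)) < ε' / 2 := hθ' h1
      have h3 : dist (f (x N)) (x (N + 1)) < ε' / 2 :=
        lt_of_lt_of_le (hx N) (min_le_right _ _)
      calc dist (f^[N + 1] (x 0)) (x (N + 1))
          ≤ dist (f^[N + 1] (x 0)) (f (x N)) + dist (f (x N)) (x (N + 1)) :=
            dist_triangle _ _ _
        _ < ε' / 2 + ε' / 2 := by
            rw [Function.iterate_succ_apply']
            exact add_lt_add h2 h3
        _ = ε' := by ring

theorem minimal_pseudoOrbit_epsNet {X : Type*} [MetricSpace X] [CompactSpace X]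
    (f : X → X) (hf : Continuous f) (hmin : ∀ x : X, omegaLim f x = Set.univ)
    (ε : ℝ) (hε : 0 < ε) :
    ∃ δ > (0 : ℝ), ∃ n : ℕ, ∀ x : ℕ → X, (∀ i, dist (f (x i)) (x (i + 1)) < δ) →
      ∀ y : X, ∃ i ≤ n, dist (x i) y < ε := by
  -- finite ε/4-net of X
  have htb : TotallyBounded (Set.univ : Set X) := isCompact_univ.totallyBounded
  rcases (Metric.totallyBounded_iff.mp htb) (ε / 4) (by linarith) with ⟨t, htfin, htcov⟩
  -- choose visit bounds for every c
  have hvis : ∀ c : X, ∃ N : ℕ, ∀ x : X, ∃ i ≤ N, dist (f^[i] x) c < ε / 4 :=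
    fun c => visit_bound f hf hmin c (ε / 4) (by linarith)
  choose g hg using hvis
  set n := htfin.toFinset.sup g with hn
  rcases pseudo_track f hf (ε / 2) (by linarith) n with ⟨δ, hδ, hδ'⟩
  refine ⟨δ, hδ, n, fun x hx y => ?_⟩
  rcases Set.mem_iUnion₂.mp (htcov (Set.mem_univ y)) with ⟨c, hct, hyc⟩
  rcases hg c (x 0) with ⟨i, hiN, hic⟩
  have hin : i ≤ n := le_trans hiN (Finset.le_sup (htfin.mem_toFinset.mpr hct))
  have htrack : dist (f^[i] (x 0)) (x i) < ε / 2 := hδ' x hx i hin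
  refine ⟨i, hin, ?_⟩
  have hyc' : dist c y < ε / 4 := by rw [Metric.mem_ball] at hyc; rwa [dist_comm]
  calc dist (x i) y ≤ dist (x i) (f^[i] (x 0)) + dist (f^[i] (x 0)) c + dist c y :=
        dist_triangle4 _ _ _ _
    _ < ε / 2 + ε / 4 + ε / 4 := by
        rw [dist_comm (x i)]
        exact add_lt_add (add_lt_add htrack hic) hyc'
    _ = ε := by ring
end
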